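/- For any LE-ALC ABox A, the tableaux completion Ā of A contains a clash if and only if A is inconsistent. -/

import Mathlib

/-!
Common formal infrastructure for the description logic LE-ALC:
syntax of concepts, individual names, ABox terms, the tableaux expansion
rules and completion, and the polarity-based (enriched formal context)
semantics.
-/

namespace LEALC

/-- LE-ALC concepts: `C ::= D | C₁ ∧ C₂ | C₁ ∨ C₂ | [R_□]C | ⟨R_◇⟩C`. -/
inductive Cpt : Type
  | atom : ℕ → Cpt
  | meet : Cpt → Cpt → Cpt
  | join : Cpt → Cpt → Cpt
  | box  : Cpt → Cpt
  | dia  : Cpt → Cpt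
  deriving DecidableEq

/-- Object individual names: ordinary names from `OBJ`, classifying objects
`a_C`, and the prefixed names `◇b`, `◆b` generated by the tableaux. -/
inductive ObName : Type
  | base : ℕ → ObName
  | cls  : Cpt → ObName
  | dia  : ObName → ObName
  | bdia : ObName → ObName
  deriving DecidableEq

/-- Feature individual names: ordinary names from `FEAT`, classifying features
`x_C`, and the prefixed names `□y`, `■y` generated by the tableaux. -/
inductive FtName : Type
  | base : ℕ → FtName
  | cls  : Cpt → FtName
  | box  : FtName → FtName
  | bbox : FtName → FtName
  deriving DecidableEq

/-- `◇b`, with the identification `◇a_C = a_{◇C}`. -/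
def ObName.diaS : ObName → ObName
  | .cls C => .cls (.dia C)
  | b => .dia b

/-- `□y`, with the identification `□x_C = x_{□C}`. -/
def FtName.boxS : FtName → FtName
  | .cls C => .cls (.box C)
  | y => .box y

/-- Positive (unnegated) ABox terms:
`a I x`, `a R_□ x`, `x R_◇ a`, `a : C`, `x :: C`. -/
inductive PTerm : Type
  | rI   : ObName → FtName → PTerm
  | rbox : ObName → FtName → PTerm
  | rdia : FtName → ObName → PTerm
  | mem  : ObName → Cpt → PTerm
  | fmem : FtName → Cpt → PTerm
  deriving DecidableEq

/-- ABox terms: a positive term or its negation. -/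
inductive Term : Type
  | pos : PTerm → Term
  | neg : PTerm → Term
  deriving DecidableEq

/-- The relational terms are `a I x`, `a R_□ x` and `x R_◇ a`. -/
def PTerm.IsRelational : PTerm → Prop
  | .rI _ _ => True
  | .rbox _ _ => True
  | .rdia _ _ => True
  | .mem _ _ => False
  | .fmem _ _ => False

/-- Subformulas (subconcepts) of a concept. -/
def Cpt.subs : Cpt → Finset Cpt
  | .atom n => {Cpt.atom n}
  | .meet C₁ C₂ => insert (Cpt.meet C₁ C₂) (C₁.subs ∪ C₂.subs)
  | .join C₁ C₂ => insert (Cpt.join C₁ C₂) (C₁.subs ∪ C₂.subs)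
  | .box C => insert (Cpt.box C) C.subs
  | .dia C => insert (Cpt.dia C) C.subs

/-- The concepts occurring in a term (subformulas of the concept of a
(possibly negated) membership assertion). -/
def Term.cpts : Term → Finset Cpt
  | .pos (.mem _ C) => C.subs
  | .pos (.fmem _ C) => C.subs
  | .neg (.mem _ C) => C.subs
  | .neg (.fmem _ C) => C.subs
  | _ => ∅

/-- The concept `C` occurs in the set of terms `A`. -/
def Occurs (C : Cpt) (A : Set Term) : Prop := ∃ t ∈ A, C ∈ t.cpts

def PTerm.objs : PTerm → List ObName
  | .rI b _ => [b]
  | .rbox b _ => [b]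
  | .rdia _ b => [b]
  | .mem b _ => [b]
  | .fmem _ _ => []

def PTerm.feats : PTerm → List FtName
  | .rI _ y => [y]
  | .rbox _ y => [y]
  | .rdia y _ => [y]
  | .mem _ _ => []
  | .fmem y _ => [y]

def Term.objs : Term → List ObName
  | .pos t => t.objs
  | .neg t => t.objs

def Term.feats : Term → List FtName
  | .pos t => t.feats
  | .neg t => t.feats

/-- The object name `b` occurs in the set of terms `S`. -/
def ObOccurs (b : ObName) (S : Set Term) : Prop := ∃ t ∈ S, b ∈ t.objs

/-- The feature name `y` occurs in the set of terms `S`. -/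
def FtOccurs (y : FtName) (S : Set Term) : Prop := ∃ t ∈ S, y ∈ t.feats

def ObName.IsBase (b : ObName) : Prop := ∃ n, b = ObName.base n
def FtName.IsBase (y : FtName) : Prop := ∃ n, y = FtName.base n

/-- A term all of whose individual names are ordinary (non-generated) names. -/
def Term.Plain (t : Term) : Prop :=
  (∀ b ∈ t.objs, b.IsBase) ∧ (∀ y ∈ t.feats, y.IsBase)

/-- An ABox is a set of terms over the ordinary individual names `OBJ`/`FEAT`
(the generated names `a_C`, `x_C`, `◇b`, `◆b`, `□y`, `■y` are fresh). -/
def ABoxWF (A : Set Term) : Prop := ∀ t ∈ A, t.Plain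

def Cpt.csize : Cpt → ℕ
  | .atom _ => 1
  | .meet C₁ C₂ => C₁.csize + C₂.csize + 1
  | .join C₁ C₂ => C₁.csize + C₂.csize + 1
  | .box C => C.csize + 1
  | .dia C => C.csize + 1

def PTerm.psize : PTerm → ℕ
  | .rI _ _ => 1
  | .rbox _ _ => 1
  | .rdia _ _ => 1
  | .mem _ C => C.csize + 1
  | .fmem _ C => C.csize + 1

def Term.tsize : Term → ℕ
  | .pos t => t.psize + 1
  | .neg t => t.psize + 2

/-- The size `|A|` of an ABox. -/
def aboxSize (A : Finset Term) : ℕ := A.sum Term.tsize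

/-- Box-depth of a concept. -/
def Cpt.bd : Cpt → ℕ
  | .atom _ => 0
  | .meet C₁ C₂ => max C₁.bd C₂.bd
  | .join C₁ C₂ => max C₁.bd C₂.bd
  | .box C => C.bd + 1
  | .dia C => C.bd

/-- Diamond-depth of a concept. -/
def Cpt.dd : Cpt → ℕ
  | .atom _ => 0
  | .meet C₁ C₂ => max C₁.dd C₂.dd
  | .join C₁ C₂ => max C₁.dd C₂.dd
  | .box C => C.dd
  | .dia C => C.dd + 1

/-- Box-depth of an object name (names in the input ABox have depth 0,
prefixing changes the depth, classifying names inherit depths from their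
concept). -/
def ObName.bd : ObName → ℤ
  | .base _ => 0
  | .cls C => -(C.bd : ℤ)
  | .dia b => b.bd
  | .bdia b => b.bd + 1

/-- Diamond-depth of an object name. -/
def ObName.dd : ObName → ℤ
  | .base _ => 0
  | .cls C => -(C.dd : ℤ)
  | .dia b => b.dd + 1
  | .bdia b => b.dd

/-- Box-depth of a feature name. -/
def FtName.bd : FtName → ℤ
  | .base _ => 0
  | .cls C => -(C.bd : ℤ)
  | .box y => y.bd + 1
  | .bbox y => y.bd

/-- Diamond-depth of a feature name. -/
def FtName.dd : FtName → ℤ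
  | .base _ => 0
  | .cls C => -(C.dd : ℤ)
  | .box y => y.dd
  | .bbox y => y.dd + 1

/-- All concepts occurring in an ABox. -/
def aboxCpts (A : Finset Term) : Finset Cpt := A.biUnion Term.cpts

/-- `□_D(A)`: maximal box-depth of a concept occurring in `A`. -/
def aboxBd (A : Finset Term) : ℕ := (aboxCpts A).sup Cpt.bd

/-- `◇_D(A)`: maximal diamond-depth of a concept occurring in `A`. -/
def aboxDd (A : Finset Term) : ℕ := (aboxCpts A).sup Cpt.dd

/-- One-step derivability: `Deriv E A S t` holds iff the term `t` can be
added by applying one of the LE-ALC tableaux expansion rules (or the extra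
rule `E`) to the current set of terms `S`, `A` being the input ABox (used
for the side conditions of the creation and inverse rules). -/
inductive Deriv (E : Term → Term → Prop) (A S : Set Term) : Term → Prop
  /-- creation rule -/
  | create_a {C : Cpt} : Occurs C A → Deriv E A S (.pos (.mem (.cls C) C))
  | create_x {C : Cpt} : Occurs C A → Deriv E A S (.pos (.fmem (.cls C) C))
  /-- basic rule -/
  | basic {b y C} : Term.pos (.mem b C) ∈ S → Term.pos (.fmem y C) ∈ S →
      Deriv E A S (.pos (.rI b y))
  /-- rules for the logical connectives -/
  | andA_l {b C₁ C₂} : Term.pos (.mem b (.meet C₁ C₂)) ∈ S → Deriv E A S (.pos (.mem b C₁))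
  | andA_r {b C₁ C₂} : Term.pos (.mem b (.meet C₁ C₂)) ∈ S → Deriv E A S (.pos (.mem b C₂))
  | orX_l {y C₁ C₂} : Term.pos (.fmem y (.join C₁ C₂)) ∈ S → Deriv E A S (.pos (.fmem y C₁))
  | orX_r {y C₁ C₂} : Term.pos (.fmem y (.join C₁ C₂)) ∈ S → Deriv E A S (.pos (.fmem y C₂))
  | boxR {b y C} : Term.pos (.mem b (.box C)) ∈ S → Term.pos (.fmem y C) ∈ S →
      Deriv E A S (.pos (.rbox b y))
  | diaR {b y C} : Term.pos (.fmem y (.dia C)) ∈ S → Term.pos (.mem b C) ∈ S →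
      Deriv E A S (.pos (.rdia y b))
  /-- inverse rules for the connectives -/
  | andA_inv {b C₁ C₂} : Term.pos (.mem b C₁) ∈ S → Term.pos (.mem b C₂) ∈ S →
      Occurs (.meet C₁ C₂) A → Deriv E A S (.pos (.mem b (.meet C₁ C₂)))
  | orX_inv {y C₁ C₂} : Term.pos (.fmem y C₁) ∈ S → Term.pos (.fmem y C₂) ∈ S →
      Occurs (.join C₁ C₂) A → Deriv E A S (.pos (.fmem y (.join C₁ C₂)))
  /-- adjunction rules -/
  | adj_box_l {b y} : Term.pos (.rbox b y) ∈ S → Deriv E A S (.pos (.rI (.bdia b) y))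
  | adj_box_r {b y} : Term.pos (.rbox b y) ∈ S → Deriv E A S (.pos (.rI b (FtName.boxS y)))
  | adj_dia_l {b y} : Term.pos (.rdia y b) ∈ S → Deriv E A S (.pos (.rI (ObName.diaS b) y))
  | adj_dia_r {b y} : Term.pos (.rdia y b) ∈ S → Deriv E A S (.pos (.rI b (.bbox y)))
  /-- I-compatibility rules -/
  | icomp_box {b y} : Term.pos (.rI b (FtName.boxS y)) ∈ S → Deriv E A S (.pos (.rbox b y))
  | icomp_bbox {b y} : Term.pos (.rI b (.bbox y)) ∈ S → Deriv E A S (.pos (.rdia y b))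
  | icomp_dia {b y} : Term.pos (.rI (ObName.diaS b) y) ∈ S → Deriv E A S (.pos (.rdia y b))
  | icomp_bdia {b y} : Term.pos (.rI (.bdia b) y) ∈ S → Deriv E A S (.pos (.rbox b y))
  /-- basic rules for negative assertions -/
  | neg_b {b C} : Term.neg (.mem b C) ∈ S → Deriv E A S (.neg (.rI b (.cls C)))
  | neg_x {y C} : Term.neg (.fmem y C) ∈ S → Deriv E A S (.neg (.rI (.cls C) y))
  /-- appending rules -/
  | app_x {b C} : Term.pos (.rI b (.cls C)) ∈ S → Deriv E A S (.pos (.mem b C))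
  | app_a {y C} : Term.pos (.rI (.cls C) y) ∈ S → Deriv E A S (.pos (.fmem y C))
  /-- an additional expansion rule `E` -/
  | extra {t t'} : E t t' → t ∈ S → Deriv E A S t'

/-- `S` contains `A` and is closed under the expansion rules. -/
def RuleClosed (E : Term → Term → Prop) (A S : Set Term) : Prop :=
  A ⊆ S ∧ ∀ t, Deriv E A S t → t ∈ S

/-- The tableaux completion `Ā` of the ABox `A` (w.r.t. the LE-ALC expansion
rules together with the extra rule `E`): the least set of terms containing
`A` and closed under the rules. -/
def Compl (E : Term → Term → Prop) (A : Set Term) : Set Term :=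
  {t | ∀ S : Set Term, RuleClosed E A S → t ∈ S}

/-- No extra expansion rule: the plain LE-ALC tableaux algorithm. -/
def noExt : Term → Term → Prop := fun _ _ => False

/-- One expansion step of the tableaux algorithm: a rule is applied to the
current set `B` and adds a new term. -/
def Step (E : Term → Term → Prop) (A B B' : Set Term) : Prop :=
  ∃ t, Deriv E A B t ∧ t ∉ B ∧ B' = insert t B

/-- A clash: some relational term occurs together with its negation. -/
def HasClash (S : Set Term) : Prop :=
  ∃ β : PTerm, β.IsRelational ∧ Term.pos β ∈ S ∧ Term.neg β ∈ S

/-- The separation rule `SA(b,d)`: from `b I x` infer `d I x`. -/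
def ruleSA (b d : ObName) : Term → Term → Prop :=
  fun t t' => ∃ x : FtName, t = Term.pos (.rI b x) ∧ t' = Term.pos (.rI d x)

/-- The separation rule `SX(y,z)`: from `a I y` infer `a I z`. -/
def ruleSX (y z : FtName) : Term → Term → Prop :=
  fun t t' => ∃ a : ObName, t = Term.pos (.rI a y) ∧ t' = Term.pos (.rI a z)

/-- The rule `SA(R_□,R_◇,b)`: from `b R_□ y` infer `y R_◇ b`. -/
def ruleSAR (b : ObName) : Term → Term → Prop :=
  fun t t' => ∃ x : FtName, t = Term.pos (.rbox b x) ∧ t' = Term.pos (.rdia x b)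

/-- The rule `SX(R_◇,R_□,y)`: from `y R_◇ a` infer `a R_□ y`. -/
def ruleSXR (y : FtName) : Term → Term → Prop :=
  fun t t' => ∃ a : ObName, t = Term.pos (.rdia y a) ∧ t' = Term.pos (.rbox a y)

/-! ## Semantics: enriched formal contexts -/

/-- `I^{(1)}[B]` -/
def gup {O F : Type} (I : O → F → Prop) (B : Set O) : Set F := {x | ∀ a ∈ B, I a x}

/-- `I^{(0)}[Y]` -/
def gdn {O F : Type} (I : O → F → Prop) (Y : Set F) : Set O := {a | ∀ x ∈ Y, I a x}

/-- Galois-stability for sets of objects. -/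
def StableO {O F : Type} (I : O → F → Prop) (B : Set O) : Prop := gdn I (gup I B) = B

/-- Galois-stability for sets of features. -/
def StableF {O F : Type} (I : O → F → Prop) (Y : Set F) : Prop := gup I (gdn I Y) = Y

/-- An interpretation of LE-ALC: an enriched formal context `(Ob, Ft, I, R_□, R_◇)`
together with interpretations of the individual names and of the atomic
concepts (an atomic concept is interpreted by the formal concept whose
extent is `vA n` and whose intent is `gup I (vA n)`). -/
structure Model where
  Ob : Type
  Ft : Type
  I : Ob → Ft → Prop
  Rb : Ob → Ft → Prop
  Rd : Ft → Ob → Prop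
  oi : ObName → Ob
  fi : FtName → Ft
  vA : ℕ → Set Ob

/-- Intent of the interpretation of an atomic concept. -/
def Model.vX (M : Model) (n : ℕ) : Set M.Ft := gup M.I (M.vA n)

/-- Well-formedness of an interpretation: `R_□` and `R_◇` are `I`-compatible,
and atomic concepts are interpreted by formal concepts. -/
def Model.Good (M : Model) : Prop :=
  (∀ x, StableO M.I {a | M.Rb a x}) ∧
  (∀ a, StableF M.I {x | M.Rb a x}) ∧
  (∀ a, StableF M.I {x | M.Rd x a}) ∧
  (∀ x, StableO M.I {a | M.Rd x a}) ∧
  (∀ n, StableO M.I (M.vA n))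

/-- The interpretation `C^M = (extent, intent)` of a concept. -/
def Model.ci (M : Model) : Cpt → Set M.Ob × Set M.Ft
  | .atom n => (M.vA n, M.vX n)
  | .meet C₁ C₂ =>
      ((Model.ci M C₁).1 ∩ (Model.ci M C₂).1,
        gup M.I ((Model.ci M C₁).1 ∩ (Model.ci M C₂).1))
  | .join C₁ C₂ =>
      (gdn M.I ((Model.ci M C₁).2 ∩ (Model.ci M C₂).2),
        (Model.ci M C₁).2 ∩ (Model.ci M C₂).2)
  | .box C =>
      (gdn M.Rb (Model.ci M C).2, gup M.I (gdn M.Rb (Model.ci M C).2))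
  | .dia C =>
      (gdn M.I (gup (fun a x => M.Rd x a) (Model.ci M C).1),
        gup (fun a x => M.Rd x a) (Model.ci M C).1)

/-- Satisfaction of positive ABox terms. -/
def Model.SatP (M : Model) : PTerm → Prop
  | .rI b y => M.I (M.oi b) (M.fi y)
  | .rbox b y => M.Rb (M.oi b) (M.fi y)
  | .rdia y b => M.Rd (M.fi y) (M.oi b)
  | .mem b C => M.oi b ∈ (Model.ci M C).1
  | .fmem y C => M.fi y ∈ (Model.ci M C).2

/-- Satisfaction of ABox terms. -/
def Model.Sat (M : Model) : Term → Prop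
  | .pos t => M.SatP t
  | .neg t => ¬ M.SatP t

/-- `M` is a model of the set of terms `A`. -/
def Model.SatAll (M : Model) (A : Set Term) : Prop := ∀ t ∈ A, M.Sat t

/-- An ABox is consistent iff it has a model. -/
def Consistent (A : Set Term) : Prop := ∃ M : Model, M.Good ∧ M.SatAll A

/-- `A ⊨ t`: every model of `A` satisfies `t`. -/
def Entails (A : Set Term) (t : Term) : Prop :=
  ∀ M : Model, M.Good → M.SatAll A → M.Sat t

/-- `A ⊨ C₁ ⊑ C₂`: in every model of `A`, `C₁^M ≤ C₂^M` in the concept lattice. -/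
def EntailsSub (A : Set Term) (C₁ C₂ : Cpt) : Prop :=
  ∀ M : Model, M.Good → M.SatAll A → (Model.ci M C₁).1 ⊆ (Model.ci M C₂).1

/-! ### Semantic concept operations -/

/-- The operation `[R_□]` on (extent, intent) pairs. -/
def Model.cbox (M : Model) (c : Set M.Ob × Set M.Ft) : Set M.Ob × Set M.Ft :=
  (gdn M.Rb c.2, gup M.I (gdn M.Rb c.2))

/-- The operation `⟨R_◇⟩` on (extent, intent) pairs. -/
def Model.cdia (M : Model) (c : Set M.Ob × Set M.Ft) : Set M.Ob × Set M.Ft :=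
  (gdn M.I (gup (fun a x => M.Rd x a) c.1), gup (fun a x => M.Rd x a) c.1)

/-- The operation `◆` (left adjoint of `[R_□]`). -/
def Model.cbdia (M : Model) (c : Set M.Ob × Set M.Ft) : Set M.Ob × Set M.Ft :=
  (gdn M.I (gup M.Rb c.1), gup M.Rb c.1)

/-- The operation `■` (right adjoint of `⟨R_◇⟩`). -/
def Model.cbbox (M : Model) (c : Set M.Ob × Set M.Ft) : Set M.Ob × Set M.Ft :=
  (gdn (fun a x => M.Rd x a) c.2, gup M.I (gdn (fun a x => M.Rd x a) c.2))

/-- The concept `𝐚 = (a^{↑↓}, a^{↑})` generated by an object. -/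
def Model.genO (M : Model) (a : M.Ob) : Set M.Ob × Set M.Ft :=
  (gdn M.I (gup M.I {a}), gup M.I {a})

/-- The concept `𝐱 = (x^{↓}, x^{↓↑})` generated by a feature. -/
def Model.genF (M : Model) (x : M.Ft) : Set M.Ob × Set M.Ft :=
  (gdn M.I {x}, gup M.I (gdn M.I {x}))

/-- The concept companion `con(b)` of an object name, interpreted in `M`. -/
def Model.conO (M : Model) : ObName → Set M.Ob × Set M.Ft
  | .base n => M.genO (M.oi (.base n))
  | .cls C => M.genO (M.oi (.cls C))
  | .dia b => M.cdia (Model.conO M b)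
  | .bdia b => M.cbdia (Model.conO M b)

/-- The concept companion `con(y)` of a feature name, interpreted in `M`. -/
def Model.conF (M : Model) : FtName → Set M.Ob × Set M.Ft
  | .base n => M.genF (M.fi (.base n))
  | .cls C => M.genF (M.fi (.cls C))
  | .box y => M.cbox (Model.conF M y)
  | .bbox y => M.cbbox (Model.conF M y)

/-! ### The canonical model built from the tableaux completion -/

/-- Classical `dite`. -/
noncomputable def cdite {α : Sort*} (p : Prop) (f : p → α) (g : ¬ p → α) : α :=
  @dite α p (Classical.dec p) f g

/-- The canonical model built from the tableaux completion `Ā` of `A`: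
its objects (resp. features) are the object (resp. feature) names occurring
in `Ā` (plus a dummy point interpreting the names not occurring in `Ā`),
every name occurring in `Ā` is interpreted by itself, the relations are read
off from `Ā`, and an atomic concept `D` is interpreted by the formal concept
`(x_D^↓, a_D^↑)`. -/
noncomputable def canModel (A : Finset Term) : Model where
  Ob := Option {b : ObName // ObOccurs b (Compl noExt ↑A)}
  Ft := Option {y : FtName // FtOccurs y (Compl noExt ↑A)}
  I := fun o x => ∃ b y, o = some b ∧ x = some y ∧
        Term.pos (.rI b.1 y.1) ∈ Compl noExt ↑A
  Rb := fun o x => ∃ b y, o = some b ∧ x = some y ∧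
        Term.pos (.rbox b.1 y.1) ∈ Compl noExt ↑A
  Rd := fun x o => ∃ b y, o = some b ∧ x = some y ∧
        Term.pos (.rdia y.1 b.1) ∈ Compl noExt ↑A
  oi := fun b => cdite (ObOccurs b (Compl noExt ↑A)) (fun h => some ⟨b, h⟩) (fun _ => none)
  fi := fun y => cdite (FtOccurs y (Compl noExt ↑A)) (fun h => some ⟨y, h⟩) (fun _ => none)
  vA := fun n => {o | ∃ b, o = some b ∧
        Term.pos (.rI b.1 (.cls (.atom n))) ∈ Compl noExt ↑A}

/-! ### ◇-leading and □-leading concepts -/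

/-- ◇-leading concepts. -/
inductive DiaLeading : Cpt → Prop
  | atom (n : ℕ) : DiaLeading (.dia (.atom n))
  | dia {C : Cpt} : DiaLeading C → DiaLeading (.dia C)
  | join {C : Cpt} (C₁ : Cpt) : DiaLeading C → DiaLeading (.join C C₁)
  | meet {C₁ C₂ : Cpt} : DiaLeading C₁ → DiaLeading C₂ → DiaLeading (.meet C₁ C₂)

/-- □-leading concepts. -/
inductive BoxLeading : Cpt → Prop
  | atom (n : ℕ) : BoxLeading (.box (.atom n))
  | box {C : Cpt} : BoxLeading C → BoxLeading (.box C)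
  | meet {C : Cpt} (C₁ : Cpt) : BoxLeading C → BoxLeading (.meet C C₁)
  | join {C₁ C₂ : Cpt} : BoxLeading C₁ → BoxLeading C₂ → BoxLeading (.join C₁ C₂)


/-!
Soundness. In a model of `A` every individual name, including those generated by the
tableaux, denotes a formal concept: a base name the concept generated by its interpretation,
`a_C` and `x_C` the concept `C^M`, and `◇b`, `◆b`, `□y`, `■y` the images of the concepts of
`b`, `y` under the operators. Read as inequalities between these concepts, the terms produced
by every expansion rule are sound (the adjunction and `I`-compatibility rules are the
adjunctions `◆ ⊣ [R_□]` and `⟨R_◇⟩ ⊣ ■`), and on the plain terms of `A` the inequality is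
equivalent to satisfaction. So `Ā` never contains a term together with its negation.

Completeness. A rule-closed set `S` of terms is itself an interpretation, with all names as
objects and features and the relations read off `S`. The adjunction and `I`-compatibility
rules make every row and column of `R_□` and `R_◇` a row or column of `I`, hence
Galois-stable, and the rules for the connectives give `C^M = ({b | b : C ∈ S}, {y | y :: C ∈ S})`
for every concept occurring in `A`. If `S` is clash-free, this interpretation is a model of `A`.
-/

section Polar

open Order

variable {O F F' : Type} {I : O → F → Prop}

theorem stableO_iff_isExtent {S : Set O} : StableO I S ↔ IsExtent I S := isExtent_iff.symm

theorem stableF_iff_isIntent {Y : Set F} : StableF I Y ↔ IsIntent I Y := isIntent_iff.symm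

theorem stableO_of_forall_mem_iff {S : Set O} (x : F) (h : ∀ a, a ∈ S ↔ I a x) :
    StableO I S := by
  have : S = lowerPolar I {x} := by ext a; rw [h, mem_lowerPolar_singleton]
  rw [this]
  exact stableO_iff_isExtent.2 isExtent_lowerPolar

theorem stableF_of_forall_mem_iff {Y : Set F} (a : O) (h : ∀ x, x ∈ Y ↔ I a x) :
    StableF I Y := by
  have : Y = upperPolar I {a} := by ext x; rw [h, mem_upperPolar_singleton]
  rw [this]
  exact stableF_iff_isIntent.2 isIntent_upperPolar

theorem StableO.inter {S T : Set O} (hS : StableO I S) (hT : StableO I T) :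
    StableO I (S ∩ T) :=
  stableO_iff_isExtent.2 ((stableO_iff_isExtent.1 hS).inter (stableO_iff_isExtent.1 hT))

theorem StableF.inter {S T : Set F} (hS : StableF I S) (hT : StableF I T) :
    StableF I (S ∩ T) :=
  stableF_iff_isIntent.2 ((stableF_iff_isIntent.1 hS).inter (stableF_iff_isIntent.1 hT))

theorem stableO_gdn {R : O → F' → Prop} (h : ∀ x, StableO I {a | R a x}) (Y : Set F') :
    StableO I (gdn R Y) := by
  have : gdn R Y = ⋂ x ∈ Y, {a | R a x} := by ext; simp [gdn]
  rw [this]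
  exact stableO_iff_isExtent.2 (.iInter₂ _ fun x _ => stableO_iff_isExtent.1 (h x))

theorem stableF_gup {O' : Type} {R : O' → F → Prop} (h : ∀ a, StableF I {x | R a x})
    (B : Set O') : StableF I (gup R B) := by
  have : gup R B = ⋂ a ∈ B, {x | R a x} := by ext; simp [gup]
  rw [this]
  exact stableF_iff_isIntent.2 (.iInter₂ _ fun a _ => stableF_iff_isIntent.1 (h a))

end Polar

namespace Model

variable {M : Model} {c d : Set M.Ob × Set M.Ft}

def IsConcept (M : Model) (c : Set M.Ob × Set M.Ft) : Prop :=
  c.1 = gdn M.I c.2 ∧ c.2 = gup M.I c.1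

namespace IsConcept

theorem stableO (hc : M.IsConcept c) : StableO M.I c.1 := by
  rw [stableO_iff_isExtent, hc.1]
  exact Order.isExtent_lowerPolar

theorem stableF (hc : M.IsConcept c) : StableF M.I c.2 := by
  rw [stableF_iff_isIntent, hc.2]
  exact Order.isIntent_upperPolar

theorem fst_subset_iff (hc : M.IsConcept c) (hd : M.IsConcept d) : c.1 ⊆ d.1 ↔ d.2 ⊆ c.2 := by
  constructor
  · intro h
    rw [hc.2, hd.2]
    exact upperPolar_anti _ h
  · intro h
    rw [hc.1, hd.1]
    exact lowerPolar_anti _ h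

theorem mem_fst_iff (hc : M.IsConcept c) (a : M.Ob) : a ∈ c.1 ↔ (M.genO a).1 ⊆ c.1 :=
  ⟨fun ha => (stableO_iff_isExtent.1 hc.stableO).lowerPolar_upperPolar_subset
      (Set.singleton_subset_iff.2 ha),
    fun h => h (subset_lowerPolar_upperPolar _ {a} rfl)⟩

theorem mem_snd_iff (hc : M.IsConcept c) (x : M.Ft) : x ∈ c.2 ↔ c.1 ⊆ (M.genF x).1 := by
  rw [hc.2]
  exact ⟨fun hx a ha _ hy => hy ▸ hx a ha, fun h a ha => h ha x rfl⟩

end IsConcept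

theorem isConcept_genO (a : M.Ob) : M.IsConcept (M.genO a) :=
  ⟨rfl, (upperPolar_lowerPolar_upperPolar _ _).symm⟩

theorem isConcept_genF (x : M.Ft) : M.IsConcept (M.genF x) :=
  ⟨(lowerPolar_upperPolar_lowerPolar _ _).symm, rfl⟩

theorem isConcept_cbox (hg : M.Good) : M.IsConcept (M.cbox c) :=
  ⟨(stableO_gdn hg.1 c.2).symm, rfl⟩

theorem isConcept_cbdia (hg : M.Good) : M.IsConcept (M.cbdia c) :=
  ⟨rfl, (stableF_gup hg.2.1 c.1).symm⟩

theorem isConcept_cdia (hg : M.Good) : M.IsConcept (M.cdia c) :=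
  ⟨rfl, (stableF_gup hg.2.2.1 c.1).symm⟩

theorem isConcept_cbbox (hg : M.Good) : M.IsConcept (M.cbbox c) :=
  ⟨(stableO_gdn hg.2.2.2.1 c.2).symm, rfl⟩

theorem isConcept_ci (hg : M.Good) (C : Cpt) : M.IsConcept (M.ci C) := by
  induction C with
  | atom n => exact ⟨(hg.2.2.2.2 n).symm, rfl⟩
  | meet C₁ C₂ ih₁ ih₂ => exact ⟨(ih₁.stableO.inter ih₂.stableO).symm, rfl⟩
  | join C₁ C₂ ih₁ ih₂ => exact ⟨rfl, (ih₁.stableF.inter ih₂.stableF).symm⟩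
  | box C _ => exact isConcept_cbox hg
  | dia C _ => exact isConcept_cdia hg


theorem cbox_mono (hc : M.IsConcept c) (hd : M.IsConcept d) (h : c.1 ⊆ d.1) :
    (M.cbox c).1 ⊆ (M.cbox d).1 :=
  lowerPolar_anti _ ((hc.fst_subset_iff hd).1 h)

theorem cdia_mono (h : c.1 ⊆ d.1) : (M.cdia c).1 ⊆ (M.cdia d).1 :=
  lowerPolar_anti _ (upperPolar_anti _ h)

theorem cbdia_subset_iff (hg : M.Good) (hd : M.IsConcept d) :
    (M.cbdia c).1 ⊆ d.1 ↔ c.1 ⊆ (M.cbox d).1 := by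
  rw [(isConcept_cbdia hg).fst_subset_iff hd]
  exact subset_upperPolar_iff_subset_lowerPolar

theorem cdia_subset_iff (hg : M.Good) (hd : M.IsConcept d) :
    (M.cdia c).1 ⊆ d.1 ↔ c.1 ⊆ (M.cbbox d).1 := by
  rw [(isConcept_cdia hg).fst_subset_iff hd]
  exact subset_upperPolar_iff_subset_lowerPolar

theorem ci_join_subset_iff (hg : M.Good) (hd : M.IsConcept d) {C₁ C₂ : Cpt} :
    (M.ci (.join C₁ C₂)).1 ⊆ d.1 ↔ (M.ci C₁).1 ⊆ d.1 ∧ (M.ci C₂).1 ⊆ d.1 := by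
  rw [(isConcept_ci hg _).fst_subset_iff hd, (isConcept_ci hg C₁).fst_subset_iff hd,
    (isConcept_ci hg C₂).fst_subset_iff hd]
  exact Set.subset_inter_iff

theorem rel_iff_genO_subset_genF (a : M.Ob) (x : M.Ft) :
    M.I a x ↔ (M.genO a).1 ⊆ (M.genF x).1 :=
  (mem_lowerPolar_singleton (r := M.I)).symm.trans ((isConcept_genF x).mem_fst_iff a)

theorem rb_iff_mem_cbox_genF (hg : M.Good) (a : M.Ob) (x : M.Ft) :
    M.Rb a x ↔ a ∈ (M.cbox (M.genF x)).1 := by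
  refine ⟨fun h x' hx' => ?_, fun h => h x (subset_upperPolar_lowerPolar _ {x} rfl)⟩
  exact (stableF_iff_isIntent.1 (hg.2.1 a)).upperPolar_lowerPolar_subset
    (Set.singleton_subset_iff.2 h) hx'

theorem rd_iff_mem_cdia_genO (hg : M.Good) (a : M.Ob) (x : M.Ft) :
    M.Rd x a ↔ x ∈ (M.cdia (M.genO a)).2 := by
  refine ⟨fun h a' ha' => ?_, fun h => h a (subset_lowerPolar_upperPolar _ {a} rfl)⟩
  exact (stableO_iff_isExtent.1 (hg.2.2.2.1 x)).lowerPolar_upperPolar_subset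
    (Set.singleton_subset_iff.2 h) ha'

/-- Unlike `Model.conO`, a classifying name `a_C` denotes `C^M` itself rather than the concept
generated by its interpretation. -/
def obCpt (M : Model) : ObName → Set M.Ob × Set M.Ft
  | .base n => M.genO (M.oi (.base n))
  | .cls C => M.ci C
  | .dia b => M.cdia (M.obCpt b)
  | .bdia b => M.cbdia (M.obCpt b)

def ftCpt (M : Model) : FtName → Set M.Ob × Set M.Ft
  | .base n => M.genF (M.fi (.base n))
  | .cls C => M.ci C
  | .box y => M.cbox (M.ftCpt y)
  | .bbox y => M.cbbox (M.ftCpt y)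

theorem isConcept_obCpt (hg : M.Good) (b : ObName) : M.IsConcept (M.obCpt b) := by
  cases b with
  | base n => exact isConcept_genO _
  | cls C => exact isConcept_ci hg C
  | dia b => exact isConcept_cdia hg
  | bdia b => exact isConcept_cbdia hg

theorem isConcept_ftCpt (hg : M.Good) (y : FtName) : M.IsConcept (M.ftCpt y) := by
  cases y with
  | base n => exact isConcept_genF _
  | cls C => exact isConcept_ci hg C
  | box y => exact isConcept_cbox hg
  | bbox y => exact isConcept_cbbox hg

theorem obCpt_diaS (b : ObName) : M.obCpt b.diaS = M.cdia (M.obCpt b) := by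
  cases b <;> rfl

theorem ftCpt_boxS (y : FtName) : M.ftCpt y.boxS = M.cbox (M.ftCpt y) := by
  cases y <;> rfl

def ConSatP (M : Model) : PTerm → Prop
  | .rI b y => (M.obCpt b).1 ⊆ (M.ftCpt y).1
  | .rbox b y => (M.obCpt b).1 ⊆ (M.cbox (M.ftCpt y)).1
  | .rdia y b => (M.cdia (M.obCpt b)).1 ⊆ (M.ftCpt y).1
  | .mem b C => (M.obCpt b).1 ⊆ (M.ci C).1
  | .fmem y C => (M.ci C).1 ⊆ (M.ftCpt y).1

def ConSat (M : Model) : Term → Prop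
  | .pos p => M.ConSatP p
  | .neg p => ¬ M.ConSatP p

theorem satP_iff_conSatP (hg : M.Good) {p : PTerm} (hobj : ∀ b ∈ p.objs, b.IsBase)
    (hft : ∀ y ∈ p.feats, y.IsBase) : M.SatP p ↔ M.ConSatP p := by
  cases p with
  | rI b y =>
      obtain ⟨n, rfl⟩ := hobj b (List.mem_singleton_self b)
      obtain ⟨m, rfl⟩ := hft y (List.mem_singleton_self y)
      exact rel_iff_genO_subset_genF _ _
  | rbox b y =>
      obtain ⟨n, rfl⟩ := hobj b (List.mem_singleton_self b)
      obtain ⟨m, rfl⟩ := hft y (List.mem_singleton_self y)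
      exact (rb_iff_mem_cbox_genF hg _ _).trans ((isConcept_cbox hg).mem_fst_iff _)
  | rdia y b =>
      obtain ⟨n, rfl⟩ := hobj b (List.mem_singleton_self b)
      obtain ⟨m, rfl⟩ := hft y (List.mem_singleton_self y)
      exact (rd_iff_mem_cdia_genO hg _ _).trans ((isConcept_cdia hg).mem_snd_iff _)
  | mem b C =>
      obtain ⟨n, rfl⟩ := hobj b (List.mem_singleton_self b)
      exact (isConcept_ci hg C).mem_fst_iff _
  | fmem y C =>
      obtain ⟨m, rfl⟩ := hft y (List.mem_singleton_self y)
      exact (isConcept_ci hg C).mem_snd_iff _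

theorem sat_iff_conSat (hg : M.Good) {t : Term} (ht : t.Plain) : M.Sat t ↔ M.ConSat t := by
  cases t with
  | pos p => exact satP_iff_conSatP hg ht.1 ht.2
  | neg p => exact not_congr (satP_iff_conSatP hg ht.1 ht.2)


theorem conSatP_rI_boxS_iff {b : ObName} {y : FtName} :
    M.ConSatP (.rI b y.boxS) ↔ M.ConSatP (.rbox b y) := by
  rw [ConSatP, ftCpt_boxS, ConSatP]

theorem conSatP_rI_diaS_iff {b : ObName} {y : FtName} :
    M.ConSatP (.rI b.diaS y) ↔ M.ConSatP (.rdia y b) := by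
  rw [ConSatP, obCpt_diaS, ConSatP]

theorem ruleClosed_conSat (hg : M.Good) {A : Set Term} (hA : ∀ t ∈ A, M.ConSat t) :
    RuleClosed noExt A {t | M.ConSat t} := by
  refine ⟨hA, fun t d => ?_⟩
  have hft := isConcept_ftCpt hg
  cases d with
  | create_a _ | create_x _ => exact Set.Subset.rfl
  | basic h₁ h₂ => exact Set.Subset.trans h₁ h₂
  | andA_l h => exact fun a ha => (h ha).1
  | andA_r h => exact fun a ha => (h ha).2
  | orX_l h => exact ((ci_join_subset_iff hg (hft _)).1 h).1
  | orX_r h => exact ((ci_join_subset_iff hg (hft _)).1 h).2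
  | @boxR b y C h₁ h₂ => exact Set.Subset.trans h₁ (cbox_mono (isConcept_ci hg C) (hft y) h₂)
  | diaR h₁ h₂ => exact Set.Subset.trans (cdia_mono h₂) h₁
  | andA_inv h₁ h₂ _ => exact Set.subset_inter h₁ h₂
  | orX_inv h₁ h₂ _ => exact (ci_join_subset_iff hg (hft _)).2 ⟨h₁, h₂⟩
  | adj_box_l h => exact (cbdia_subset_iff hg (hft _)).2 h
  | adj_box_r h => exact conSatP_rI_boxS_iff.2 h
  | adj_dia_l h => exact conSatP_rI_diaS_iff.2 h
  | adj_dia_r h => exact (cdia_subset_iff hg (hft _)).1 h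
  | icomp_box h => exact conSatP_rI_boxS_iff.1 h
  | icomp_bbox h => exact (cdia_subset_iff hg (hft _)).2 h
  | icomp_dia h => exact conSatP_rI_diaS_iff.1 h
  | icomp_bdia h => exact (cbdia_subset_iff hg (hft _)).1 h
  | neg_b h | neg_x h | app_x h | app_a h => exact h
  | extra h _ => exact h.elim

end Model

theorem not_hasClash_compl {A : Set Term} (hwf : ABoxWF A) (hA : Consistent A) :
    ¬ HasClash (Compl noExt A) := by
  obtain ⟨M, hg, hM⟩ := hA
  have hcl := M.ruleClosed_conSat hg fun t ht => (M.sat_iff_conSat hg (hwf t ht)).1 (hM t ht)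
  rintro ⟨β, -, hpos, hneg⟩
  exact hneg _ hcl (hpos _ hcl)

theorem Deriv.mono {E : Term → Term → Prop} {A S S' : Set Term} (hs : S ⊆ S') {t : Term}
    (d : Deriv E A S t) : Deriv E A S' t := by
  cases d with
  | create_a h => exact .create_a h
  | create_x h => exact .create_x h
  | basic h₁ h₂ => exact .basic (hs h₁) (hs h₂)
  | andA_l h => exact .andA_l (hs h)
  | andA_r h => exact .andA_r (hs h)
  | orX_l h => exact .orX_l (hs h)
  | orX_r h => exact .orX_r (hs h)
  | boxR h₁ h₂ => exact .boxR (hs h₁) (hs h₂)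
  | diaR h₁ h₂ => exact .diaR (hs h₁) (hs h₂)
  | andA_inv h₁ h₂ hC => exact .andA_inv (hs h₁) (hs h₂) hC
  | orX_inv h₁ h₂ hC => exact .orX_inv (hs h₁) (hs h₂) hC
  | adj_box_l h => exact .adj_box_l (hs h)
  | adj_box_r h => exact .adj_box_r (hs h)
  | adj_dia_l h => exact .adj_dia_l (hs h)
  | adj_dia_r h => exact .adj_dia_r (hs h)
  | icomp_box h => exact .icomp_box (hs h)
  | icomp_bbox h => exact .icomp_bbox (hs h)
  | icomp_dia h => exact .icomp_dia (hs h)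
  | icomp_bdia h => exact .icomp_bdia (hs h)
  | neg_b h => exact .neg_b (hs h)
  | neg_x h => exact .neg_x (hs h)
  | app_x h => exact .app_x (hs h)
  | app_a h => exact .app_a (hs h)
  | extra h ht => exact .extra h (hs ht)

theorem compl_ruleClosed (E : Term → Term → Prop) (A : Set Term) :
    RuleClosed E A (Compl E A) :=
  ⟨fun _ ht _ hS => hS.1 ht,
    fun t d S hS => hS.2 t (d.mono fun _ (ht : _ ∈ Compl E A) => ht S hS)⟩

theorem Cpt.mem_subs_self (C : Cpt) : C ∈ C.subs := by
  cases C <;> simp [Cpt.subs]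

theorem Term.cpts_neg (p : PTerm) : (Term.neg p).cpts = (Term.pos p).cpts := by
  cases p <;> rfl

abbrev termModel (S : Set Term) : Model where
  Ob := ObName
  Ft := FtName
  I b y := Term.pos (.rI b y) ∈ S
  Rb b y := Term.pos (.rbox b y) ∈ S
  Rd y b := Term.pos (.rdia y b) ∈ S
  oi := id
  fi := id
  vA n := {b | Term.pos (.rI b (.cls (.atom n))) ∈ S}

namespace RuleClosed

variable {E : Term → Term → Prop} {A S : Set Term} (hS : RuleClosed E A S)
  {b : ObName} {y : FtName} {C : Cpt}
include hS

theorem mem {t : Term} (d : Deriv E A S t) : t ∈ S := hS.2 t d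

theorem rbox_iff_rI_boxS : Term.pos (.rbox b y) ∈ S ↔ Term.pos (.rI b y.boxS) ∈ S :=
  ⟨fun h => hS.mem (.adj_box_r h), fun h => hS.mem (.icomp_box h)⟩

theorem rbox_iff_rI_bdia : Term.pos (.rbox b y) ∈ S ↔ Term.pos (.rI (.bdia b) y) ∈ S :=
  ⟨fun h => hS.mem (.adj_box_l h), fun h => hS.mem (.icomp_bdia h)⟩

theorem rdia_iff_rI_diaS : Term.pos (.rdia y b) ∈ S ↔ Term.pos (.rI b.diaS y) ∈ S :=
  ⟨fun h => hS.mem (.adj_dia_l h), fun h => hS.mem (.icomp_dia h)⟩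

theorem rdia_iff_rI_bbox : Term.pos (.rdia y b) ∈ S ↔ Term.pos (.rI b (.bbox y)) ∈ S :=
  ⟨fun h => hS.mem (.adj_dia_r h), fun h => hS.mem (.icomp_bbox h)⟩

theorem mem_iff_rI_cls (hC : Occurs C A) :
    Term.pos (.mem b C) ∈ S ↔ Term.pos (.rI b (.cls C)) ∈ S :=
  ⟨fun h => hS.mem (.basic h (hS.mem (.create_x hC))), fun h => hS.mem (.app_x h)⟩

theorem fmem_iff_rI_cls (hC : Occurs C A) :
    Term.pos (.fmem y C) ∈ S ↔ Term.pos (.rI (.cls C) y) ∈ S :=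
  ⟨fun h => hS.mem (.basic (hS.mem (.create_a hC)) h), fun h => hS.mem (.app_a h)⟩

theorem termModel_good : (termModel S).Good :=
  ⟨fun y => stableO_of_forall_mem_iff y.boxS fun _ => hS.rbox_iff_rI_boxS,
    fun b => stableF_of_forall_mem_iff (.bdia b) fun _ => hS.rbox_iff_rI_bdia,
    fun b => stableF_of_forall_mem_iff b.diaS fun _ => hS.rdia_iff_rI_diaS,
    fun y => stableO_of_forall_mem_iff (.bbox y) fun _ => hS.rdia_iff_rI_bbox,
    fun n => stableO_of_forall_mem_iff (.cls (.atom n)) fun _ => Iff.rfl⟩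

theorem gup_setOf_mem (hC : Occurs C A) :
    gup (termModel S).I {b | Term.pos (.mem b C) ∈ S} = {y | Term.pos (.fmem y C) ∈ S} :=
  Set.ext fun _ => ⟨fun hy => (hS.fmem_iff_rI_cls hC).2 (hy _ (hS.mem (.create_a hC))),
    fun hy _ hb => hS.mem (.basic hb hy)⟩

theorem gdn_setOf_fmem (hC : Occurs C A) :
    gdn (termModel S).I {y | Term.pos (.fmem y C) ∈ S} = {b | Term.pos (.mem b C) ∈ S} :=
  Set.ext fun _ => ⟨fun hb => (hS.mem_iff_rI_cls hC).2 (hb _ (hS.mem (.create_x hC))),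
    fun hb _ hy => hS.mem (.basic hb hy)⟩

theorem setOf_mem_meet {C₁ C₂ : Cpt} (hC : Occurs (.meet C₁ C₂) A) :
    {b | Term.pos (.mem b (.meet C₁ C₂)) ∈ S} =
      {b | Term.pos (.mem b C₁) ∈ S} ∩ {b | Term.pos (.mem b C₂) ∈ S} :=
  Set.ext fun _ => ⟨fun h => ⟨hS.mem (.andA_l h), hS.mem (.andA_r h)⟩,
    fun h => hS.mem (.andA_inv h.1 h.2 hC)⟩

theorem setOf_fmem_join {C₁ C₂ : Cpt} (hC : Occurs (.join C₁ C₂) A) :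
    {y | Term.pos (.fmem y (.join C₁ C₂)) ∈ S} =
      {y | Term.pos (.fmem y C₁) ∈ S} ∩ {y | Term.pos (.fmem y C₂) ∈ S} :=
  Set.ext fun _ => ⟨fun h => ⟨hS.mem (.orX_l h), hS.mem (.orX_r h)⟩,
    fun h => hS.mem (.orX_inv h.1 h.2 hC)⟩

theorem gdn_rb_setOf_fmem (hC : Occurs C A) :
    gdn (termModel S).Rb {y | Term.pos (.fmem y C) ∈ S} =
      {b | Term.pos (.mem b (.box C)) ∈ S} := by
  refine Set.ext fun b => ⟨fun hb => ?_, fun hb _ hy => hS.mem (.boxR hb hy)⟩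
  have hbx : Term.pos (.rbox b (.cls C)) ∈ S := hb _ (hS.mem (.create_x hC))
  exact hS.mem (.app_x (hS.mem (.adj_box_r hbx)))

theorem gup_rd_setOf_mem (hC : Occurs C A) :
    gup (fun b y => (termModel S).Rd y b) {b | Term.pos (.mem b C) ∈ S} =
      {y | Term.pos (.fmem y (.dia C)) ∈ S} := by
  refine Set.ext fun y => ⟨fun hy => ?_, fun hy _ hb => hS.mem (.diaR hy hb)⟩
  have hya : Term.pos (.rdia y (.cls C)) ∈ S := hy _ (hS.mem (.create_a hC))
  exact hS.mem (.app_a (hS.mem (.adj_dia_l hya)))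

theorem termModel_ci (hC : ∀ D ∈ C.subs, Occurs D A) :
    (termModel S).ci C = ({b | Term.pos (.mem b C) ∈ S}, {y | Term.pos (.fmem y C) ∈ S}) := by
  induction C with
  | atom n =>
      have hocc := hC _ (Cpt.mem_subs_self _)
      have hvA : (termModel S).vA n = {b | Term.pos (.mem b (.atom n)) ∈ S} :=
        Set.ext fun _ => (hS.mem_iff_rI_cls hocc).symm
      rw [Model.ci, Model.vX, hvA, hS.gup_setOf_mem hocc]
  | meet C₁ C₂ ih₁ ih₂ =>
      have hocc := hC _ (Cpt.mem_subs_self _)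
      rw [Model.ci, ih₁ fun D hD => hC D (by simp [Cpt.subs, hD]),
        ih₂ fun D hD => hC D (by simp [Cpt.subs, hD]), ← hS.setOf_mem_meet hocc,
        hS.gup_setOf_mem hocc]
  | join C₁ C₂ ih₁ ih₂ =>
      have hocc := hC _ (Cpt.mem_subs_self _)
      rw [Model.ci, ih₁ fun D hD => hC D (by simp [Cpt.subs, hD]),
        ih₂ fun D hD => hC D (by simp [Cpt.subs, hD]), ← hS.setOf_fmem_join hocc,
        hS.gdn_setOf_fmem hocc]
  | box C ih =>
      have hsub : ∀ D ∈ C.subs, Occurs D A := fun D hD => hC D (by simp [Cpt.subs, hD])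
      rw [Model.ci, ih hsub, hS.gdn_rb_setOf_fmem (hsub C C.mem_subs_self),
        hS.gup_setOf_mem (hC _ (Cpt.mem_subs_self _))]
  | dia C ih =>
      have hsub : ∀ D ∈ C.subs, Occurs D A := fun D hD => hC D (by simp [Cpt.subs, hD])
      rw [Model.ci, ih hsub, hS.gup_rd_setOf_mem (hsub C C.mem_subs_self),
        hS.gdn_setOf_fmem (hC _ (Cpt.mem_subs_self _))]

theorem termModel_satP_iff {p : PTerm} (hp : ∀ D ∈ (Term.pos p).cpts, Occurs D A) :
    (termModel S).SatP p ↔ Term.pos p ∈ S := by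
  cases p with
  | mem b C => rw [Model.SatP, hS.termModel_ci hp]; rfl
  | fmem y C => rw [Model.SatP, hS.termModel_ci hp]; rfl
  | rI _ _ | rbox _ _ | rdia _ _ => rfl

theorem hasClash_of_pos_mem_of_neg_mem {p : PTerm} (hp : ∀ D ∈ (Term.pos p).cpts, Occurs D A)
    (hpos : Term.pos p ∈ S) (hneg : Term.neg p ∈ S) : HasClash S := by
  cases p with
  | mem b C =>
      exact ⟨.rI b (.cls C), trivial, (hS.mem_iff_rI_cls (hp C C.mem_subs_self)).1 hpos,
        hS.mem (.neg_b hneg)⟩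
  | fmem y C =>
      exact ⟨.rI (.cls C) y, trivial, (hS.fmem_iff_rI_cls (hp C C.mem_subs_self)).1 hpos,
        hS.mem (.neg_x hneg)⟩
  | rI _ _ | rbox _ _ | rdia _ _ => exact ⟨_, by trivial, hpos, hneg⟩

theorem consistent_of_not_hasClash (hS' : ¬ HasClash S) : Consistent A := by
  refine ⟨termModel S, hS.termModel_good, fun t ht => ?_⟩
  have hocc : ∀ D ∈ t.cpts, Occurs D A := fun D hD => ⟨t, ht, hD⟩
  cases t with
  | pos p => exact (hS.termModel_satP_iff hocc).2 (hS.1 ht)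
  | neg p =>
      rw [Term.cpts_neg] at hocc
      exact fun hp => hS' (hS.hasClash_of_pos_mem_of_neg_mem hocc
        ((hS.termModel_satP_iff hocc).1 hp) (hS.1 ht))

end RuleClosed

/-- For any LE-ALC ABox `A`, the tableaux completion `Ā` of
`A` contains a clash if and only if `A` is inconsistent. -/
theorem clash_iff_inconsistent (A : Finset Term) (hwf : ABoxWF ↑A) :
    HasClash (Compl noExt ↑A) ↔ ¬ Consistent ↑A := by
  refine ⟨fun hcl hA => not_hasClash_compl hwf hA hcl, fun hA => ?_⟩
  by_contra hcl
  exact hA ((compl_ruleClosed noExt _).consistent_of_not_hasClash hcl)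

end LEALC
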